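/- arXiv:1705.01529 — 6 statements merged into one kernel-verified Lean document; each statement's English description precedes it below -/
import Mathlib

section
/- Let n ≥ 2, let α, β > 0, and let X ∈ DC(α, β). Then the number of eigenvalues of X with negative real part (i.e., the number of roots of the characteristic polynomial of X in the open left half-plane, counted with multiplicity) does not exceed the number of eigenvalues of αI − βΣ* with negative real part. Since αI − βΣ* itself lies in DC(α, β), this bound is attained as a maximum over DC(α, β). -/
open Polynomial Matrix Complex Finset

/-- The doubly cyclic matrix `X(a,b)`: diagonal entries `aₖ`, entries `-bₖ`
just above the diagonal (cyclically, so the `(n,1)` entry is `-bₙ`), zero elsewhere. -/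
def dcMatrix {n : ℕ} (a b : Fin n → ℝ) : Matrix (Fin n) (Fin n) ℝ :=
  Matrix.of fun i j =>
    if j = i then a i else if (j : ℕ) = ((i : ℕ) + 1) % n then -(b i) else 0

/-- The `n`-cycle permutation matrix `Σ*`. -/
def sigmaStar (n : ℕ) : Matrix (Fin n) (Fin n) ℝ :=
  Matrix.of fun i j => if (j : ℕ) = ((i : ℕ) + 1) % n then 1 else 0

/-- The number of eigenvalues of a real matrix with negative real part,
counted with multiplicity as roots of its characteristic polynomial over `ℂ`. -/
noncomputable def negEigCount {n : ℕ} (M : Matrix (Fin n) (Fin n) ℝ) : ℕ :=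
  Multiset.card (((M.map Complex.ofReal).charpoly.roots).filter (fun z => z.re < 0))

def dcShape {n : ℕ} {R : Type*} [CommRing R] (A B : Fin n → R) : Matrix (Fin n) (Fin n) R :=
  Matrix.of fun i j => if j = i then A i else if (j : ℕ) = ((i : ℕ) + 1) % n then B i else 0



variable {n : ℕ}


lemma fin_succ_iff [NeZero n] (hn : 2 ≤ n) (i j : Fin n) :
    (j : ℕ) = ((i : ℕ) + 1) % n ↔ j = i + 1 := by
  have h1 : ((1 : Fin n) : ℕ) = 1 := by
    have : 1 % n = 1 := Nat.mod_eq_of_lt (by omega)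
    simpa [Fin.val_one'] using this
  rw [Fin.ext_iff, Fin.add_def, h1]

open Fin.NatCast in
lemma perm_classify [NeZero n] (hn : 2 ≤ n) (σ : Equiv.Perm (Fin n))
    (h : ∀ i, σ i = i ∨ σ i = i - 1) : σ = 1 ∨ ∀ i, σ i = i - 1 := by
  have hone : (1 : Fin n) ≠ 0 := by
    simp [Fin.ext_iff, Nat.mod_eq_of_lt (show 1 < n by omega)]
  by_cases hid : ∀ i, σ i = i
  · exact Or.inl (Equiv.ext hid)
  · right
    push_neg at hid
    obtain ⟨i₀, hi₀⟩ := hid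
    have hi₀' : σ i₀ = i₀ - 1 := (h i₀).resolve_left hi₀
    -- closure under subtracting 1
    have step : ∀ i : Fin n, σ i = i - 1 → σ (i - 1) = (i - 1) - 1 := by
      intro i hi
      rcases h (i - 1) with h'' | h''
      · exfalso
        have : i - 1 = i := σ.injective (by rw [hi, h''])
        have := sub_eq_self.mp this
        exact hone this
      · exact h''
    have key : ∀ k : ℕ, σ (i₀ - (k : Fin n)) = (i₀ - (k : Fin n)) - 1 := by
      intro k
      induction k with
      | zero => simpa using hi₀'
      | succ m ih =>
        have : ((m + 1 : ℕ) : Fin n) = (m : Fin n) + 1 := by push_cast; ring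
        rw [this, show i₀ - ((m : Fin n) + 1) = (i₀ - (m : Fin n)) - 1 by rw [sub_add_eq_sub_sub]]
        exact step _ ih
    intro j
    have := key ((i₀ - j : Fin n) : ℕ)
    rwa [Fin.cast_val_eq_self, sub_sub_cancel] at this

lemma det_dcShape {R : Type*} [CommRing R] (hn : 2 ≤ n) (A B : Fin n → R) :
    (dcShape A B).det = ∏ i, A i + (-1) ^ (n - 1) * ∏ i, B i := by
  obtain ⟨m, rfl⟩ : ∃ m, n = m + 1 := ⟨n - 1, by omega⟩
  set c : Equiv.Perm (Fin (m + 1)) := (finRotate (m + 1))⁻¹ with hcdef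
  have hc : ∀ i, c i = i - 1 := by
    intro i
    have : c i = (finRotate (m + 1)).symm i := rfl
    rw [this, Equiv.symm_apply_eq, finRotate_succ_apply, sub_add_cancel]
  have hone : (1 : Fin (m + 1)) ≠ 0 := by
    simp [Fin.ext_iff, Nat.mod_eq_of_lt (show 1 < m + 1 by omega)]
  have h1c : (1 : Equiv.Perm (Fin (m + 1))) ≠ c := by
    intro hcon
    have := (congrArg (fun σ : Equiv.Perm (Fin (m+1)) => σ 0) hcon).symm
    rw [hc 0] at this
    simp only [Equiv.Perm.one_apply] at this
    exact hone ((sub_eq_zero.mp this).symm)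
  have hzero : ∀ σ ∈ (Finset.univ : Finset (Equiv.Perm (Fin (m+1)))),
      σ ∉ ({1, c} : Finset (Equiv.Perm (Fin (m+1)))) →
      Equiv.Perm.sign σ • ∏ i, dcShape A B (σ i) i = 0 := by
    intro σ _ hσ
    by_cases hcond : ∀ i, σ i = i ∨ σ i = i - 1
    · exfalso
      rcases perm_classify hn σ hcond with h1 | h2
      · exact hσ (by simp [h1])
      · have : σ = c := Equiv.ext fun i => by rw [h2 i, hc i]
        exact hσ (by simp [this])
    · push_neg at hcond
      obtain ⟨i, hi1, hi2⟩ := hcond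
      have hentry : dcShape A B (σ i) i = 0 := by
        simp only [dcShape, Matrix.of_apply]
        rw [if_neg, if_neg]
        · intro hcon
          rw [fin_succ_iff hn] at hcon
          exact hi2 (eq_sub_iff_add_eq.mpr hcon.symm)
        · exact fun hcon => hi1 hcon.symm
      rw [Finset.prod_eq_zero (f := fun j => dcShape A B (σ j) j) (Finset.mem_univ i) hentry, smul_zero]
  rw [Matrix.det_apply, ← Finset.sum_subset (Finset.subset_univ {1, c}) hzero,
    Finset.sum_pair h1c]
  have hterm1 : ∏ i, dcShape A B ((1 : Equiv.Perm (Fin (m+1))) i) i = ∏ i, A i := by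
    apply Finset.prod_congr rfl
    intro i _
    simp [dcShape]
  have htermc : ∏ i, dcShape A B (c i) i = ∏ i, B i := by
    have : ∀ i, dcShape A B (c i) i = B (i - 1) := by
      intro i
      rw [hc i]
      simp only [dcShape, Matrix.of_apply]
      rw [if_neg, if_pos]
      · rw [fin_succ_iff hn, sub_add_cancel]
      · intro hcon
        exact hone (sub_eq_self.mp hcon.symm)
    rw [Finset.prod_congr rfl fun i _ => this i]
    exact Equiv.prod_comp (Equiv.subRight (1 : Fin (m+1))) B
  have hsignc : Equiv.Perm.sign c = (-1) ^ m := by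
    rw [hcdef, Equiv.Perm.sign_inv, sign_finRotate, Nat.add_sub_cancel]
  rw [hterm1, htermc, hsignc]
  simp only [Equiv.Perm.sign_one, one_smul, Units.smul_def, Units.val_pow_eq_pow_val,
    Units.val_neg, Units.val_one, zsmul_eq_mul, Nat.add_sub_cancel]
  push_cast
  ring




lemma succ_mod_ne (hn : 2 ≤ n) (i : Fin n) : ((i : ℕ) + 1) % n ≠ (i : ℕ) := by
  have := i.isLt
  rcases Nat.lt_or_ge ((i : ℕ) + 1) n with h | h
  · rw [Nat.mod_eq_of_lt h]; omega
  · have : (i : ℕ) + 1 = n := by omega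
    rw [this, Nat.mod_self]; omega

lemma dc_const_eq (hn : 2 ≤ n) (α β : ℝ) :
    dcMatrix (fun _ : Fin n => α) (fun _ : Fin n => β)
      = α • (1 : Matrix (Fin n) (Fin n) ℝ) - β • sigmaStar n := by
  ext i j
  simp only [dcMatrix, sigmaStar, Matrix.of_apply, Matrix.sub_apply, Matrix.smul_apply,
    Matrix.one_apply, smul_eq_mul]
  by_cases hij : j = i
  · subst hij
    rw [if_pos rfl, if_pos rfl, if_neg (fun h => succ_mod_ne hn j h.symm)]
    ring
  · rw [if_neg hij, if_neg (fun h : i = j => hij h.symm)]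
    by_cases hsucc : (j : ℕ) = ((i : ℕ) + 1) % n
    · rw [if_pos hsucc, if_pos hsucc]; ring
    · rw [if_neg hsucc, if_neg hsucc]; ring





noncomputable def Sfun (a : Fin n → ℝ) (z : ℂ) : ℂ := ∑ k, Complex.log ((a k : ℂ) - z)

lemma wk_re_pos {a : Fin n → ℝ} (ha : ∀ k, 0 < a k) {z : ℂ} (hz : z.re < 0) (k : Fin n) :
    0 < ((a k : ℂ) - z).re := by
  simp only [Complex.sub_re, Complex.ofReal_re]
  linarith [ha k]

lemma wk_ne {a : Fin n → ℝ} (ha : ∀ k, 0 < a k) {z : ℂ} (hz : z.re < 0) (k : Fin n) :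
    ((a k : ℂ) - z) ≠ 0 := by
  intro h
  have := wk_re_pos ha hz k
  rw [h] at this
  simp at this

lemma wk_slit {a : Fin n → ℝ} (ha : ∀ k, 0 < a k) {z : ℂ} (hz : z.re < 0) (k : Fin n) :
    ((a k : ℂ) - z) ∈ Complex.slitPlane :=
  Or.inl (wk_re_pos ha hz k)

lemma Sfun_hasDeriv {a : Fin n → ℝ} (ha : ∀ k, 0 < a k) {z : ℂ} (hz : z.re < 0) :
    HasDerivAt (Sfun a) (∑ k, -((a k : ℂ) - z)⁻¹) z := by
  apply HasDerivAt.fun_sum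
  intro k _
  have h1 : HasDerivAt (fun w : ℂ => (a k : ℂ) - w) (-1) z := by
    simpa using (hasDerivAt_const z ((a k : ℂ))).fun_sub (hasDerivAt_id z)
  have h2 := (Complex.hasDerivAt_log (wk_slit ha hz k)).comp z h1
  simpa [mul_comm, Function.comp_def] using h2

/-- univalence of `Sfun` on the open left half plane -/
lemma Sfun_inj {a : Fin n → ℝ} (hn : 1 ≤ n) (ha : ∀ k, 0 < a k) {z₁ z₂ : ℂ}
    (h1 : z₁.re < 0) (h2 : z₂.re < 0) (heq : Sfun a z₁ = Sfun a z₂) : z₁ = z₂ := by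
  by_contra hne
  set d : ℂ := z₁ - z₂ with hd
  have hd0 : d ≠ 0 := sub_ne_zero.mpr hne
  -- the segment stays in the left half plane
  have hseg : ∀ t : ℝ, t ∈ Set.Icc (0:ℝ) 1 → (z₂ + (t : ℂ) * d).re < 0 := by
    intro t ht
    have : (z₂ + (t : ℂ) * d).re = (1 - t) * z₂.re + t * z₁.re := by
      simp [Complex.add_re, Complex.mul_re, hd, Complex.sub_re, Complex.ofReal_re,
        Complex.ofReal_im]
      ring
    rw [this]
    rcases ht with ⟨ht0, ht1⟩
    rcases eq_or_lt_of_le ht1 with h | h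
    · subst h; simpa using h1
    · nlinarith
  -- the auxiliary real function
  set e : ℂ → ℂ := fun w => Sfun a (z₂ + w * d) * (starRingEnd ℂ) d with he
  set φ : ℝ → ℝ := fun t => (e t).re with hφ
  have hediff : ∀ t : ℝ, t ∈ Set.Icc (0:ℝ) 1 →
      HasDerivAt φ (((∑ k, -((a k : ℂ) - (z₂ + (t:ℂ) * d))⁻¹) * d * (starRingEnd ℂ) d).re) t := by
    intro t ht
    have hin : HasDerivAt (fun w : ℂ => z₂ + w * d) d (t : ℂ) := by
      simpa using ((hasDerivAt_id ((t:ℂ))).mul_const d).const_add z₂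
    have hS := (Sfun_hasDeriv ha (hseg t ht)).comp ((t:ℂ)) hin
    have hE : HasDerivAt e ((∑ k, -((a k : ℂ) - (z₂ + (t:ℂ) * d))⁻¹) * d * (starRingEnd ℂ) d)
        (t : ℂ) := hS.mul_const _
    exact hE.real_of_complex
  -- derivative is negative
  have hderivneg : ∀ t : ℝ, t ∈ Set.Icc (0:ℝ) 1 →
      (((∑ k, -((a k : ℂ) - (z₂ + (t:ℂ) * d))⁻¹) * d * (starRingEnd ℂ) d).re) < 0 := by
    intro t ht
    have hmc : d * (starRingEnd ℂ) d = (Complex.normSq d : ℂ) := by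
      rw [Complex.mul_conj]
    rw [mul_assoc, hmc]
    have : ((∑ k, -((a k : ℂ) - (z₂ + (t:ℂ) * d))⁻¹) * (Complex.normSq d : ℂ)).re
        = (∑ k, -((a k : ℂ) - (z₂ + (t:ℂ) * d))⁻¹).re * Complex.normSq d := by
      simp [Complex.mul_re, Complex.ofReal_re, Complex.ofReal_im]
    rw [this]
    apply mul_neg_of_neg_of_pos _ (Complex.normSq_pos.mpr hd0)
    rw [Complex.re_sum]
    apply Finset.sum_neg
    · intro k _
      rw [Complex.neg_re, neg_lt, neg_zero, Complex.inv_re]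
      apply div_pos (wk_re_pos ha (hseg t ht) k)
      exact Complex.normSq_pos.mpr (wk_ne ha (hseg t ht) k)
    · have : Nonempty (Fin n) := ⟨⟨0, by omega⟩⟩
      exact Finset.univ_nonempty
  have hanti : StrictAntiOn φ (Set.Icc (0:ℝ) 1) := by
    apply strictAntiOn_of_deriv_neg (convex_Icc 0 1)
    · intro t ht
      exact (hediff t ht).continuousAt.continuousWithinAt
    · intro t ht
      rw [interior_Icc] at ht
      have ht' : t ∈ Set.Icc (0:ℝ) 1 := ⟨ht.1.le, ht.2.le⟩
      rw [(hediff t ht').deriv]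
      exact hderivneg t ht'
  have h01 : φ 1 < φ 0 :=
    hanti (Set.mem_Icc.mpr ⟨le_refl 0, zero_le_one⟩) (Set.mem_Icc.mpr ⟨zero_le_one, le_refl 1⟩)
      zero_lt_one
  have hφ1 : φ 1 = φ 0 := by
    have e1 : z₂ + ((1:ℝ) : ℂ) * d = z₁ := by rw [hd]; push_cast; ring
    have e0 : z₂ + ((0:ℝ) : ℂ) * d = z₂ := by push_cast; ring
    simp only [hφ, he, e1, e0, heq]
  rw [hφ1] at h01
  exact lt_irrefl _ h01

open Real in
lemma root_facts {a : Fin n → ℝ} {α β : ℝ} (hn : 2 ≤ n) (ha : ∀ k, 0 < a k)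
    (hα : 0 < α) (hβ : 0 < β) (hga : ∏ k, a k = α ^ n)
    {z : ℂ} (hz : z.re < 0) (hroot : ∏ k, ((a k : ℂ) - z) = ((β : ℂ)) ^ n) :
    ∃ M : ℤ, Sfun a z = (Real.log (β ^ n) : ℂ) + M * (2 * (π:ℝ) * Complex.I)
      ∧ ∑ k, ((a k : ℂ) - z).arg = 2 * π * (M:ℝ)
      ∧ |(M : ℝ)| * 4 < n ∧ α / β < Real.cos (2 * π * (M:ℝ) / n) := by
  have hnpos : (0:ℝ) < n := by positivity
  have hne : Nonempty (Fin n) := ⟨⟨0, by omega⟩⟩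
  have hw := wk_ne ha hz
  have hβn : (0:ℝ) < β ^ n := pow_pos hβ n
  have hexp : Complex.exp (Sfun a z) = (β : ℂ) ^ n := by
    rw [Sfun, Complex.exp_sum, Finset.prod_congr rfl (fun k _ => Complex.exp_log (hw k))]
    exact hroot
  have hexp2 : Complex.exp ((Real.log (β ^ n) : ℂ)) = (β : ℂ) ^ n := by
    rw [← Complex.ofReal_exp, Real.exp_log hβn]
    push_cast
    ring
  obtain ⟨M, hM⟩ : ∃ M : ℤ, Sfun a z
      = (Real.log (β ^ n) : ℂ) + M * (2 * (π:ℝ) * Complex.I) := by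
    have h1 : Complex.exp (Sfun a z - (Real.log (β ^ n) : ℂ)) = 1 := by
      rw [Complex.exp_sub, hexp, hexp2, div_self]
      exact pow_ne_zero _ (Complex.ofReal_ne_zero.mpr hβ.ne')
    obtain ⟨M, hM⟩ := Complex.exp_eq_one_iff.mp h1
    refine ⟨M, ?_⟩
    exact sub_eq_iff_eq_add'.mp hM
  refine ⟨M, hM, ?_⟩
  have him : ∑ k, ((a k : ℂ) - z).arg = 2 * π * (M:ℝ) := by
    have h := congrArg Complex.im hM
    rw [Sfun, Complex.im_sum] at h
    simp only [Complex.log_im] at h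
    have hrhs : ((Real.log (β ^ n) : ℂ) + M * (2 * (π:ℝ) * Complex.I)).im = 2 * π * (M:ℝ) := by
      have hx : (Real.log (β ^ n) : ℂ) + (M:ℂ) * (2 * (π:ℝ) * Complex.I)
          = (Real.log (β ^ n) : ℂ) + ((2 * π * (M:ℝ) : ℝ) : ℂ) * Complex.I := by
        push_cast; ring
      rw [hx]
      simp
    rw [hrhs] at h
    exact h
  refine ⟨him, ?_⟩
  have habs : ∀ k, |((a k : ℂ) - z).arg| < π / 2 := fun k =>
    Complex.abs_arg_lt_pi_div_two_iff.mpr (Or.inl (wk_re_pos ha hz k))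
  have hsame : ∑ k, |((a k : ℂ) - z).arg| = 2 * π * |(M : ℝ)| := by
    rcases le_or_gt z.im 0 with hzim | hzim
    · have hargpos : ∀ k, 0 ≤ ((a k : ℂ) - z).arg := fun k =>
        Complex.arg_nonneg_iff.mpr (by simp only [Complex.sub_im, Complex.ofReal_im]; linarith)
      have h1 : ∑ k, |((a k : ℂ) - z).arg| = ∑ k, ((a k : ℂ) - z).arg :=
        Finset.sum_congr rfl fun k _ => abs_of_nonneg (hargpos k)
      have h2 : (0:ℝ) ≤ 2 * π * (M:ℝ) := by
        rw [← him]; exact Finset.sum_nonneg fun k _ => hargpos k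
      have h3 : (0:ℝ) ≤ (M:ℝ) := by nlinarith [Real.pi_pos]
      rw [h1, him, _root_.abs_of_nonneg h3]
    · have hargneg : ∀ k, ((a k : ℂ) - z).arg ≤ 0 := fun k =>
        le_of_lt (Complex.arg_neg_iff.mpr
          (by simp only [Complex.sub_im, Complex.ofReal_im]; linarith))
      have h1 : ∑ k, |((a k : ℂ) - z).arg| = -∑ k, ((a k : ℂ) - z).arg := by
        rw [← Finset.sum_neg_distrib]
        exact Finset.sum_congr rfl fun k _ => abs_of_nonpos (hargneg k)
      have h2 : 2 * π * (M:ℝ) ≤ 0 := by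
        rw [← him]; exact Finset.sum_nonpos fun k _ => hargneg k
      have h3 : (M:ℝ) ≤ 0 := by nlinarith [Real.pi_pos]
      rw [h1, him, _root_.abs_of_nonpos h3]
      ring
  have hsum_lt : 2 * π * |(M : ℝ)| < n * (π / 2) := by
    rw [← hsame]
    calc ∑ k, |((a k : ℂ) - z).arg| < ∑ _k : Fin n, π / 2 :=
          Finset.sum_lt_sum_of_nonempty Finset.univ_nonempty fun k _ => habs k
      _ = n * (π / 2) := by simp [Finset.sum_const, Finset.card_univ, nsmul_eq_mul]
  have hMbound : |(M : ℝ)| * 4 < n := by nlinarith [Real.pi_pos]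
  refine ⟨hMbound, ?_⟩
  have hθnn : ∀ k, 0 ≤ |((a k : ℂ) - z).arg| := fun k => abs_nonneg _
  have hcospos : ∀ k, 0 < Real.cos (|((a k : ℂ) - z).arg|) := fun k =>
    Real.cos_pos_of_mem_Ioo ⟨by linarith [Real.pi_pos, hθnn k], habs k⟩
  have hcosprod : (α / β) ^ n < ∏ k, Real.cos (|((a k : ℂ) - z).arg|) := by
    have hcos_eq : ∀ k ∈ Finset.univ, Real.cos (|((a k : ℂ) - z).arg|)
        = ((a k : ℂ) - z).re / ‖(a k : ℂ) - z‖ := by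
      intro k _
      rw [Real.cos_abs, Complex.cos_arg (hw k)]
    rw [Finset.prod_congr rfl hcos_eq, Finset.prod_div_distrib]
    have habsprod : ∏ k, ‖(a k : ℂ) - z‖ = β ^ n := by
      rw [← norm_prod, hroot, norm_pow, Complex.norm_real, Real.norm_of_nonneg hβ.le]
    rw [habsprod, div_pow]
    have hlt : α ^ n < ∏ k, ((a k : ℂ) - z).re :=
      calc α ^ n = ∏ k, a k := hga.symm
        _ < ∏ k, ((a k : ℂ) - z).re :=
          Finset.prod_lt_prod_of_nonempty (fun k _ => ha k)
            (fun k _ => by simp only [Complex.sub_re, Complex.ofReal_re]; linarith)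
            Finset.univ_nonempty
    gcongr
  have h3 : α / β < (∏ k, Real.cos (|((a k : ℂ) - z).arg|)) ^ ((n:ℝ)⁻¹) := by
    have hab : (0:ℝ) ≤ α / β := by positivity
    have := Real.rpow_lt_rpow (by positivity) hcosprod (by positivity : (0:ℝ) < (n:ℝ)⁻¹)
    rwa [← Real.rpow_natCast (α / β) n, ← Real.rpow_mul hab,
      mul_inv_cancel₀ hnpos.ne', Real.rpow_one] at this
  have h1 : (∏ k, Real.cos (|((a k : ℂ) - z).arg|)) ^ ((n:ℝ)⁻¹)
      ≤ ∑ k, (n:ℝ)⁻¹ * Real.cos (|((a k : ℂ) - z).arg|) := by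
    have hgm := Real.geom_mean_le_arith_mean_weighted Finset.univ (fun _ => (n:ℝ)⁻¹)
      (fun k => Real.cos (|((a k : ℂ) - z).arg|)) (fun _ _ => by positivity)
      (by simp [Finset.sum_const, Finset.card_univ, nsmul_eq_mul]
          field_simp)
      (fun k _ => (hcospos k).le)
    rwa [Real.finset_prod_rpow Finset.univ _ (fun k _ => (hcospos k).le)] at hgm
  have h2 : ∑ k, (n:ℝ)⁻¹ * Real.cos (|((a k : ℂ) - z).arg|)
      ≤ Real.cos (∑ k, (n:ℝ)⁻¹ * |((a k : ℂ) - z).arg|) := by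
    have hcc := strictConcaveOn_cos_Icc.concaveOn.le_map_sum
      (t := Finset.univ) (w := fun _ : Fin n => (n:ℝ)⁻¹)
      (p := fun k => |((a k : ℂ) - z).arg|) (fun _ _ => by positivity)
      (by simp [Finset.sum_const, Finset.card_univ, nsmul_eq_mul]
          field_simp)
      (fun k _ => ⟨by linarith [Real.pi_pos, hθnn k], (habs k).le⟩)
    simpa [smul_eq_mul] using hcc
  have hmeansum : ∑ k, (n:ℝ)⁻¹ * |((a k : ℂ) - z).arg| = 2 * π * |(M:ℝ)| / n := by
    rw [← Finset.mul_sum, hsame]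
    ring
  have hfinal : α / β < Real.cos (2 * π * |(M:ℝ)| / n) := by
    rw [← hmeansum]
    exact lt_of_lt_of_le (lt_of_lt_of_le h3 h1) h2
  have habs_eq : 2 * π * |(M:ℝ)| / n = |2 * π * (M:ℝ) / n| := by
    rw [abs_div, abs_mul, _root_.abs_of_pos (by positivity : (0:ℝ) < 2 * π),
      _root_.abs_of_pos hnpos]
  rwa [habs_eq, Real.cos_abs] at hfinal

/-- the polynomial `∏ (X - aₖ) + (-1)^(n-1) c` -/
noncomputable def Qpoly (a : Fin n → ℝ) (c : ℂ) : ℂ[X] :=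
  ∏ k, (X - C ((a k : ℂ))) + C ((-1) ^ (n - 1) * c)

lemma eval_Qpoly (a : Fin n → ℝ) (c : ℂ) (hn : 1 ≤ n) (z : ℂ) :
    (Qpoly a c).eval z = (-1) ^ (n - 1) * (c - ∏ k, ((a k : ℂ) - z)) := by
  have hneg : ∏ k, ((a k : ℂ) - z) = (-1) ^ n * ∏ k, (z - (a k : ℂ)) := by
    rw [Finset.prod_congr rfl (fun k _ => show (a k : ℂ) - z = -1 * (z - (a k : ℂ)) by ring),
      Finset.prod_mul_distrib, Finset.prod_const, Finset.card_univ, Fintype.card_fin]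
  have h2 : ((-1 : ℂ)) ^ (n - 1) * (-1) ^ n = -1 := by
    rw [← pow_add]
    have h3 : n - 1 + n = 2 * (n - 1) + 1 := by omega
    rw [h3, pow_succ, pow_mul]
    simp
  simp only [Qpoly, eval_add, eval_prod, eval_sub, eval_X, eval_C, eval_mul, eval_pow, eval_neg,
    eval_one]
  rw [hneg]
  linear_combination (∏ k, (z - (a k : ℂ))) * h2
lemma Qpoly_monic (a : Fin n → ℝ) (c : ℂ) (hn : 1 ≤ n) : (Qpoly a c).Monic := by
  have hm : (∏ k, ((X : ℂ[X]) - C ((a k : ℂ)))).Monic :=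
    monic_prod_of_monic _ _ fun k _ => monic_X_sub_C _
  have hdeg : (∏ k, ((X : ℂ[X]) - C ((a k : ℂ)))).natDegree = n := by
    rw [natDegree_prod _ _ fun k _ => X_sub_C_ne_zero _]
    simp [natDegree_X_sub_C]
  apply hm.add_of_left
  apply lt_of_le_of_lt (degree_C_le)
  rw [degree_eq_natDegree hm.ne_zero, hdeg]
  exact_mod_cast (by omega : 0 < n)

lemma Qpoly_root_simple {a : Fin n → ℝ} (hn : 2 ≤ n) (ha : ∀ k, 0 < a k) (c : ℂ)
    {z : ℂ} (hz : z.re < 0) : (Qpoly a c).rootMultiplicity z ≤ 1 := by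
  classical
  have hne : Nonempty (Fin n) := ⟨⟨0, by omega⟩⟩
  by_contra hcon
  push_neg at hcon
  have hdvd : ((X : ℂ[X]) - C z) ^ 2 ∣ Qpoly a c :=
    dvd_trans (pow_dvd_pow _ hcon) (Polynomial.pow_rootMultiplicity_dvd _ z)
  obtain ⟨q, hq⟩ := hdvd
  -- derivative of Q vanishes at z
  have hder0 : (derivative (Qpoly a c)).eval z = 0 := by
    rw [hq, derivative_mul, derivative_X_sub_C_sq]
    simp [eval_add, eval_mul, eval_pow, eval_sub, eval_X, eval_C]
  -- but the derivative is  ∑ₖ ∏_{j≠k} (X - aⱼ)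
  have hzsub : ∀ k : Fin n, z - (a k : ℂ) ≠ 0 := by
    intro k h
    have : z = (a k : ℂ) := by linear_combination h
    rw [this] at hz
    simp only [Complex.ofReal_re] at hz
    linarith [ha k]
  have hderQ : derivative (Qpoly a c) = derivative (∏ k, ((X : ℂ[X]) - C ((a k : ℂ)))) := by
    rw [Qpoly, derivative_add, derivative_C, add_zero]
  have hdereval : (derivative (Qpoly a c)).eval z
      = ∑ k, ∏ j ∈ Finset.univ.erase k, (z - (a j : ℂ)) := by
    rw [hderQ]
    have h1 : (∏ k, ((X : ℂ[X]) - C ((a k : ℂ))))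
        = (Multiset.map (fun k => (X : ℂ[X]) - C ((a k : ℂ))) Finset.univ.val).prod := rfl
    rw [h1, derivative_prod]
    have h2 : ∀ k : Fin n,
        (Multiset.map (fun i => (X : ℂ[X]) - C ((a i : ℂ))) (Finset.univ.val.erase k)).prod
          * derivative ((X : ℂ[X]) - C ((a k : ℂ)))
        = ∏ j ∈ Finset.univ.erase k, ((X : ℂ[X]) - C ((a j : ℂ))) := by
      intro k
      rw [derivative_X_sub_C, mul_one, ← Finset.erase_val, ← Finset.prod_eq_multiset_prod]
    rw [Multiset.map_congr rfl (fun k _ => h2 k)]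
    have h3 : (Multiset.map
        (fun k => ∏ j ∈ Finset.univ.erase k, ((X : ℂ[X]) - C ((a j : ℂ)))) Finset.univ.val).sum
        = ∑ k, ∏ j ∈ Finset.univ.erase k, ((X : ℂ[X]) - C ((a j : ℂ))) := rfl
    rw [h3, eval_finset_sum]
    exact Finset.sum_congr rfl fun k _ => by rw [eval_prod]; simp
  -- rewrite each erased product
  have hfac : ∀ k : Fin n, ∏ j ∈ Finset.univ.erase k, (z - (a j : ℂ))
      = (∏ j, (z - (a j : ℂ))) * (z - (a k : ℂ))⁻¹ := by
    intro k
    rw [← Finset.prod_erase_mul Finset.univ _ (Finset.mem_univ k), mul_assoc,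
      mul_inv_cancel₀ (hzsub k), mul_one]
  have hEe : (derivative (Qpoly a c)).eval z
      = (∏ j, (z - (a j : ℂ))) * ∑ k, (z - (a k : ℂ))⁻¹ := by
    rw [hdereval, Finset.mul_sum]
    exact Finset.sum_congr rfl fun k _ => hfac k
  have hprodne : (∏ j, (z - (a j : ℂ))) ≠ 0 := Finset.prod_ne_zero_iff.mpr fun j _ => hzsub j
  have hsumne : (∑ k, (z - (a k : ℂ))⁻¹) ≠ 0 := by
    intro h
    have hre : (∑ k, (z - (a k : ℂ))⁻¹).re < 0 := by
      rw [Complex.re_sum]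
      apply Finset.sum_neg
      · intro k _
        rw [Complex.inv_re]
        apply div_neg_of_neg_of_pos
        · simp only [Complex.sub_re, Complex.ofReal_re]; linarith [ha k]
        · exact Complex.normSq_pos.mpr (hzsub k)
      · exact Finset.univ_nonempty
    rw [h] at hre
    simp at hre
  rw [hEe] at hder0
  exact (mul_ne_zero hprodne hsumne) hder0

lemma Qpoly_natDegree (a : Fin n → ℝ) (c : ℂ) (hn : 1 ≤ n) : (Qpoly a c).natDegree = n := by
  have hm : (∏ k, ((X : ℂ[X]) - C ((a k : ℂ)))).Monic :=
    monic_prod_of_monic _ _ fun k _ => monic_X_sub_C _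
  have hdeg : (∏ k, ((X : ℂ[X]) - C ((a k : ℂ)))).natDegree = n := by
    rw [natDegree_prod _ _ fun k _ => X_sub_C_ne_zero _]
    simp [natDegree_X_sub_C]
  have hlt : degree (C ((-1 : ℂ) ^ (n - 1) * c)) < degree (∏ k, ((X : ℂ[X]) - C ((a k : ℂ)))) := by
    apply lt_of_le_of_lt degree_C_le
    rw [degree_eq_natDegree hm.ne_zero, hdeg]
    exact_mod_cast (by omega : 0 < n)
  rw [Qpoly, natDegree_eq_of_degree_eq_some]
  rw [degree_add_eq_left_of_degree_lt hlt, degree_eq_natDegree hm.ne_zero, hdeg]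

open Real in
lemma const_roots (hn : 2 ≤ n) {α β : ℝ} (hα : 0 < α) (hβ : 0 < β) :
    (Qpoly (fun _ : Fin n => α) ((β:ℂ) ^ n)).roots
      = ((Finset.range n).image
          (fun k => (α:ℂ) - β * Complex.exp (2 * π * Complex.I / n) ^ k)).val := by
  classical
  set ω := Complex.exp (2 * π * Complex.I / n) with hωdef
  have hω : IsPrimitiveRoot ω n := Complex.isPrimitiveRoot_exp n (by omega)
  set Qc := Qpoly (fun _ : Fin n => α) ((β:ℂ) ^ n) with hQc
  have hQm : Qc.Monic := Qpoly_monic _ _ (by omega)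
  have hQd : Qc.natDegree = n := Qpoly_natDegree _ _ (by omega)
  set S : Finset ℂ := (Finset.range n).image (fun k => (α:ℂ) - β * ω ^ k) with hS
  have hβC : ((β:ℂ)) ≠ 0 := Complex.ofReal_ne_zero.mpr hβ.ne'
  have hSroot : ∀ s ∈ S, Qc.IsRoot s := by
    intro s hs
    rw [hS, Finset.mem_image] at hs
    obtain ⟨k, hk, rfl⟩ := hs
    have heval := eval_Qpoly (fun _ : Fin n => α) ((β:ℂ) ^ n) (by omega)
      ((α:ℂ) - β * ω ^ k)
    rw [IsRoot, heval]
    have hprod : ∏ _j : Fin n, (((α:ℝ):ℂ) - ((α:ℂ) - β * ω ^ k)) = ((β:ℂ)) ^ n * (ω ^ n) ^ k := by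
      rw [Finset.prod_const, Finset.card_univ, Fintype.card_fin]
      rw [show ((α:ℝ):ℂ) - ((α:ℂ) - β * ω ^ k) = (β:ℂ) * ω ^ k by ring]
      rw [mul_pow, ← pow_mul, ← pow_mul, Nat.mul_comm]
    rw [hprod, hω.pow_eq_one, one_pow, mul_one, sub_self, mul_zero]
  have hScard : S.card = n := by
    rw [hS, Finset.card_image_of_injOn, Finset.card_range]
    intro k1 hk1 k2 hk2 h
    have : ω ^ k1 = ω ^ k2 := by
      have h := sub_right_inj.mp h
      exact mul_left_cancel₀ hβC h
    exact hω.pow_inj (Finset.mem_range.mp hk1) (Finset.mem_range.mp hk2) this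
  have hle : S.val ≤ Qc.roots := by
    rw [Multiset.le_iff_subset S.nodup]
    intro x hx
    rw [Polynomial.mem_roots hQm.ne_zero]
    exact hSroot x hx
  have hcard : Multiset.card Qc.roots ≤ Multiset.card S.val := by
    have hsplits := Polynomial.splits_iff_card_roots.mp (IsAlgClosed.splits Qc)
    rw [hsplits, hQd]
    simp [hScard]
  exact (Multiset.eq_of_le_of_card_le hle hcard).symm

open Real in
lemma main_count {a : Fin n → ℝ} {α β : ℝ} (hn : 2 ≤ n) (ha : ∀ k, 0 < a k)
    (hα : 0 < α) (hβ : 0 < β) (hga : ∏ k, a k = α ^ n) :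
    Multiset.card (((Qpoly a ((β:ℂ) ^ n)).roots).filter (fun z => z.re < 0))
      ≤ Multiset.card
        (((Qpoly (fun _ : Fin n => α) ((β:ℂ) ^ n)).roots).filter (fun z => z.re < 0)) := by
  classical
  have hπ : (0:ℝ) < π := Real.pi_pos
  set ω := Complex.exp (2 * π * Complex.I / n) with hωdef
  have hω : IsPrimitiveRoot ω n := Complex.isPrimitiveRoot_exp n (by omega)
  have hωne : ω ≠ 0 := Complex.exp_ne_zero _
  have hβC : ((β:ℂ)) ≠ 0 := Complex.ofReal_ne_zero.mpr hβ.ne'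
  set Qa := Qpoly a ((β:ℂ) ^ n) with hQa
  set Qc := Qpoly (fun _ : Fin n => α) ((β:ℂ) ^ n) with hQc
  set L := Qa.roots.filter (fun z => z.re < 0) with hL
  set Tm := Qc.roots.filter (fun z => z.re < 0) with hTm
  -- membership in L gives the product equation
  have hrootQa : ∀ z ∈ L, z.re < 0 ∧ ∏ k, ((a k : ℂ) - z) = (β:ℂ) ^ n := by
    intro z hz
    rw [hL, Multiset.mem_filter] at hz
    refine ⟨hz.2, ?_⟩
    have hroot := (Polynomial.mem_roots (Qpoly_monic a _ (by omega)).ne_zero).mp hz.1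
    rw [IsRoot, eval_Qpoly a _ (by omega)] at hroot
    have hne : ((-1 : ℂ)) ^ (n - 1) ≠ 0 := by
      apply pow_ne_zero; norm_num
    have := (mul_eq_zero.mp hroot).resolve_left hne
    exact (sub_eq_zero.mp this).symm
  -- nodup of L
  have hLnodup : L.Nodup := by
    rw [Multiset.nodup_iff_count_le_one]
    intro z
    rw [hL, Multiset.count_filter]
    split_ifs with hzre
    · rw [Polynomial.count_roots]
      exact Qpoly_root_simple hn ha _ hzre
    · omega
  have hTnodup : Tm.Nodup := by
    rw [hTm]
    apply Multiset.Nodup.filter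
    rw [hQc, const_roots hn hα hβ]
    exact Finset.nodup _
  -- the key data for each z ∈ L
  have hM_of : ∀ z ∈ L, ∃ M : ℤ,
      (round ((∑ k, ((a k : ℂ) - z).arg) / (2 * π)) : ℤ) = M
      ∧ Sfun a z = (Real.log (β ^ n) : ℂ) + M * (2 * (π:ℝ) * Complex.I)
      ∧ |(M : ℝ)| * 4 < n ∧ α / β < Real.cos (2 * π * (M:ℝ) / n) := by
    intro z hz
    obtain ⟨hzre, hprod⟩ := hrootQa z hz
    obtain ⟨M, hM1, hM2, hM3, hM4⟩ := root_facts hn ha hα hβ hga hzre hprod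
    refine ⟨M, ?_, hM1, hM3, hM4⟩
    rw [hM2]
    have h2π : (2:ℝ) * π ≠ 0 := by positivity
    rw [show 2 * π * (M:ℝ) = (M:ℝ) * (2 * π) by ring, mul_div_cancel_right₀ _ h2π]
    exact round_intCast M
  -- the injection
  set F : ℂ → ℂ := fun z => (α:ℂ) - β * ω ^ (round ((∑ k, ((a k : ℂ) - z).arg) / (2 * π)) : ℤ)
    with hF
  -- zpow facts
  have hzpow_exp : ∀ M : ℤ, ω ^ M = Complex.exp ((((2 * π * (M:ℝ) / n : ℝ)):ℂ) * Complex.I) := by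
    intro M
    rw [hωdef, ← Complex.exp_int_mul]
    congr 1
    have hnne : ((n:ℝ):ℂ) ≠ 0 := by
      simp only [ne_eq, Complex.ofReal_natCast, Nat.cast_eq_zero]
      omega
    push_cast
    field_simp
  have hFre : ∀ M : ℤ, ((α:ℂ) - β * ω ^ M).re = α - β * Real.cos (2 * π * (M:ℝ) / n) := by
    intro M
    rw [hzpow_exp M]
    rw [Complex.sub_re, Complex.ofReal_re]
    congr 1
    rw [show ((β:ℂ) * Complex.exp ((((2 * π * (M:ℝ) / n : ℝ)):ℂ) * Complex.I)).re
        = β * (Complex.exp ((((2 * π * (M:ℝ) / n : ℝ)):ℂ) * Complex.I)).re by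
      simp [Complex.mul_re, Complex.ofReal_re, Complex.ofReal_im]]
    rw [Complex.exp_ofReal_mul_I_re]
  -- ω^M is an n-th root of unity power
  have hzpow_mem : ∀ M : ℤ, ∃ k < n, ω ^ M = ω ^ k := by
    intro M
    have hn0 : (0:ℤ) < (n:ℤ) := by exact_mod_cast (by omega : 0 < n)
    refine ⟨(M % n).toNat, ?_, ?_⟩
    · have := Int.emod_lt_of_pos M hn0
      have h0 := Int.emod_nonneg M hn0.ne'
      omega
    · have h0 := Int.emod_nonneg M hn0.ne'
      have hsplit : M = ((M % n).toNat : ℤ) + n * (M / n) := by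
        rw [Int.toNat_of_nonneg h0]
        exact (Int.emod_add_mul_ediv M n).symm
      rw [show ω ^ M = ω ^ (((M % n).toNat : ℤ) + (n:ℤ) * (M / n)) by rw [← hsplit]]
      rw [zpow_add₀ hωne, _root_.zpow_mul, zpow_natCast, zpow_natCast, hω.pow_eq_one, _root_.one_zpow,
        mul_one]
  -- F maps L into Tm
  have hmaps : ∀ z ∈ L.toFinset, F z ∈ Tm.toFinset := by
    intro z hz
    rw [Multiset.mem_toFinset] at hz ⊢
    obtain ⟨M, hMr, _hMS, _hMb, hMcos⟩ := hM_of z hz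
    rw [hTm, Multiset.mem_filter]
    constructor
    · rw [hQc, const_roots hn hα hβ]
      obtain ⟨k, hk, hωMk⟩ := hzpow_mem M
      have : F z = (α:ℂ) - β * ω ^ k := by rw [hF]; simp only; rw [hMr, hωMk]
      rw [this, ← hωdef]
      apply Finset.mem_val.mpr
      exact Finset.mem_image.mpr ⟨k, Finset.mem_range.mpr hk, rfl⟩
    · have : F z = (α:ℂ) - β * ω ^ M := by rw [hF]; simp only; rw [hMr]
      rw [this, hFre M]
      have : α < β * Real.cos (2 * π * (M:ℝ) / n) := by
        rw [div_lt_iff₀ hβ] at hMcos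
        linarith
      linarith
  -- injectivity
  have hinj : Set.InjOn F (L.toFinset : Set ℂ) := by
    intro z1 hz1 z2 hz2 hFeq
    rw [Finset.mem_coe, Multiset.mem_toFinset] at hz1 hz2
    obtain ⟨M1, hM1r, hM1S, hM1b, _⟩ := hM_of z1 hz1
    obtain ⟨M2, hM2r, hM2S, hM2b, _⟩ := hM_of z2 hz2
    have hωeq : ω ^ M1 = ω ^ M2 := by
      have h1 : F z1 = (α:ℂ) - β * ω ^ M1 := by rw [hF]; simp only; rw [hM1r]
      have h2 : F z2 = (α:ℂ) - β * ω ^ M2 := by rw [hF]; simp only; rw [hM2r]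
      rw [h1, h2] at hFeq
      have := sub_right_inj.mp hFeq
      exact mul_left_cancel₀ hβC this
    have hdvd : (n:ℤ) ∣ (M1 - M2) := by
      rw [← hω.zpow_eq_one_iff_dvd]
      rw [zpow_sub₀ hωne, hωeq, div_self (zpow_ne_zero _ hωne)]
    have habslt : |M1 - M2| < (n:ℤ) := by
      have hr : |(M1:ℝ) - (M2:ℝ)| < (n:ℝ) :=
        calc |(M1:ℝ) - (M2:ℝ)| ≤ |(M1:ℝ)| + |(M2:ℝ)| := abs_sub _ _
          _ < n := by linarith
      exact_mod_cast hr
    have hMeq : M1 = M2 := by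
      have := Int.eq_zero_of_abs_lt_dvd hdvd habslt
      omega
    have hSeq : Sfun a z1 = Sfun a z2 := by rw [hM1S, hM2S, hMeq]
    have hz1re := (hrootQa z1 hz1).1
    have hz2re := (hrootQa z2 hz2).1
    exact Sfun_inj (by omega) ha hz1re hz2re hSeq
  -- now count
  calc Multiset.card L = L.toFinset.card := (Multiset.toFinset_card_of_nodup hLnodup).symm
    _ ≤ Tm.toFinset.card := Finset.card_le_card_of_injOn F hmaps hinj
    _ = Multiset.card Tm := Multiset.toFinset_card_of_nodup hTnodup


lemma charpoly_dc {n : ℕ} (hn : 2 ≤ n) (A B : Fin n → ℝ) (c : ℂ)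
    (hB : ∏ k, ((B k : ℂ)) = c) :
    ((dcMatrix A B).map Complex.ofReal).charpoly = Qpoly A c := by
  have hcm : charmatrix ((dcMatrix A B).map Complex.ofReal)
      = dcShape (fun i => (X : ℂ[X]) - C ((A i : ℂ))) (fun i => C ((B i : ℂ))) := by
    ext i j
    by_cases hij : j = i
    · subst hij
      simp [dcShape, dcMatrix, Matrix.map_apply]
    · rw [Matrix.charmatrix_apply_ne _ _ _ (fun h => hij h.symm)]
      simp only [dcShape, Matrix.of_apply, if_neg hij, Matrix.map_apply, dcMatrix,
        Matrix.of_apply, if_neg hij]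
      by_cases hsucc : (j : ℕ) = ((i : ℕ) + 1) % n
      · simp [hsucc]
      · simp [hsucc]
  rw [Matrix.charpoly, hcm, det_dcShape hn, Qpoly]
  congr 1
  rw [← map_prod, hB, _root_.map_mul, _root_.map_pow, map_neg, Polynomial.C_1]


/-- for `X ∈ DC(α, β)` (i.e. `X = X(a,b)` with positive entries and
geometric means `α`, `β`), the number of eigenvalues of `X` with negative real part
does not exceed that of `αI - βΣ*`; moreover `αI - βΣ*` itself lies in `DC(α, β)`
(it is `X(a,b)` for the constant vectors `a = (α,…,α)`, `b = (β,…,β)`),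
so the bound is attained as a maximum. -/
theorem stmt0 (n : ℕ) (hn : 2 ≤ n) (α β : ℝ) (hα : 0 < α) (hβ : 0 < β)
    (a b : Fin n → ℝ) (ha : ∀ k, 0 < a k) (hb : ∀ k, 0 < b k)
    (hga : ∏ k, a k = α ^ n) (hgb : ∏ k, b k = β ^ n) :
    negEigCount (dcMatrix a b)
      ≤ negEigCount (α • (1 : Matrix (Fin n) (Fin n) ℝ) - β • sigmaStar n) ∧
    dcMatrix (fun _ : Fin n => α) (fun _ : Fin n => β)
      = α • (1 : Matrix (Fin n) (Fin n) ℝ) - β • sigmaStar n := by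
  refine ⟨?_, dc_const_eq hn α β⟩
  rw [negEigCount, negEigCount, ← dc_const_eq hn α β]
  have hb' : ∏ k, ((b k : ℂ)) = ((β : ℂ)) ^ n := by
    rw [← Complex.ofReal_prod, hgb, Complex.ofReal_pow]
  have hb'' : ∏ _k : Fin n, ((β : ℂ)) = ((β : ℂ)) ^ n := by
    simp [Finset.prod_const, Finset.card_univ]
  rw [charpoly_dc hn a b _ hb', charpoly_dc hn (fun _ => α) (fun _ => β) _ hb'']
  exact main_count hn ha hα hβ hga
end

section
/- Let n ≥ 2 and α, β > 0. (a) If α > β, then no X ∈ DC(α, β) has an eigenvalue in the closed left half-plane {Re z ≤ 0}. (b) If α = β, then for every X ∈ DC(α, β), 0 is an eigenvalue of X, and every eigenvalue λ of X with Re λ ≤ 0 equals 0. -/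
open Polynomial Matrix

open Fin.CommRing in
lemma dc_eval {m : ℕ} (a b : Fin (m+2) → ℝ) (lam : ℂ) :
    Polynomial.eval lam (((dcMatrix a b).map Complex.ofReal).charpoly)
      = ∏ k, (lam - (a k : ℂ)) + (-1) ^ (m + 1) * ∏ k, (b k : ℂ) := by
  set M := (dcMatrix a b).map (Complex.ofReal) with hM
  set N := (charmatrix M).map (Polynomial.evalRingHom lam) with hNdef
  have hsub : ∀ i : Fin (m+2), i - 1 ≠ i := by
    intro i h
    have h1 : (1 : Fin (m+2)) = 0 := left_eq_add.mp (sub_eq_iff_eq_add.mp h)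
    simpa using congrArg Fin.val h1
  have hNd : ∀ i : Fin (m+2), N i i = lam - (a i : ℂ) := by
    intro i
    simp [hNdef, charmatrix_apply_eq, hM, dcMatrix]
  have hNo : ∀ i j : Fin (m+2), i ≠ j →
      N i j = if (j : ℕ) = ((i : ℕ) + 1) % (m+2) then (b i : ℂ) else 0 := by
    intro i j hij
    rw [hNdef, Matrix.map_apply, charmatrix_apply_ne _ _ _ hij]
    simp only [hM, dcMatrix, Matrix.map_apply, Matrix.of_apply, if_neg (Ne.symm hij)]
    split <;> simp
  -- condition characterization
  have hcond : ∀ i j : Fin (m+2), ((j : ℕ) = ((i : ℕ) + 1) % (m+2)) ↔ j = i + 1 := by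
    intro i j
    rw [Fin.ext_iff, Fin.add_def]
    simp
  set c : Equiv.Perm (Fin (m+2)) := (finRotate (m+2))⁻¹ with hcdef
  have hc : ∀ i, c i = i - 1 := by
    intro i
    have h : finRotate (m+2) (i - 1) = i := by
      rw [finRotate_succ_apply, sub_add_cancel]
    rw [hcdef]
    exact Equiv.Perm.inv_eq_iff_eq.mpr h.symm
  have hc1 : c ≠ 1 := by
    intro h
    have h0 : (0 : Fin (m+2)) - 1 = 0 := by rw [← hc 0, h]; rfl
    exact hsub 0 h0
  have hvanish : ∀ σ : Equiv.Perm (Fin (m+2)), σ ≠ 1 → σ ≠ c →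
      ∏ i, N (σ i) i = 0 := by
    intro σ hσ1 hσc
    by_contra hne
    have hstep : ∀ i, σ i = i ∨ σ i = i - 1 := by
      intro i
      have hNi : N (σ i) i ≠ 0 := fun h => hne (Finset.prod_eq_zero (Finset.mem_univ i) h)
      by_cases h : σ i = i
      · exact Or.inl h
      · right
        rw [hNo (σ i) i h] at hNi
        by_cases h2 : (i : ℕ) = ((σ i : ℕ) + 1) % (m+2)
        · have := (hcond (σ i) i).mp h2
          exact eq_sub_iff_add_eq.mpr this.symm
        · rw [if_neg h2] at hNi; exact absurd rfl hNi
    have hex : ∃ i, σ i ≠ i := by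
      by_contra hco
      push_neg at hco
      exact hσ1 (Equiv.ext hco)
    obtain ⟨i0, hi0⟩ := hex
    have hi0' : σ i0 = i0 - 1 := (hstep i0).resolve_left hi0
    have hA : ∀ i, σ i = i - 1 → σ (i - 1) = i - 1 - 1 := by
      intro i hi
      rcases hstep (i - 1) with h | h
      · exfalso
        have heq : σ (i - 1) = σ i := by rw [h, hi]
        exact hsub i (σ.injective heq)
      · exact h
    have hiter : ∀ k : ℕ, σ (i0 - (k : Fin (m+2))) = i0 - (k : Fin (m+2)) - 1 := by
      intro k
      induction k with
      | zero => simpa using hi0'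
      | succ k ih =>
        have h := hA _ ih
        have hk : ((k+1 : ℕ) : Fin (m+2)) = (k : Fin (m+2)) + 1 := by push_cast; ring
        rw [hk, ← sub_sub]
        exact h
    apply hσc
    ext j
    have h := hiter ((i0 - j).val)
    rw [Fin.cast_val_eq_self, sub_sub_cancel] at h
    rw [h, hc]
  have h1 : Polynomial.eval lam (charpoly M) = N.det := by
    rw [Matrix.charpoly, ← Polynomial.coe_evalRingHom, RingHom.map_det, hNdef]
    rfl
  rw [h1, Matrix.det_apply']
  rw [← Finset.sum_subset (Finset.subset_univ ({1, c} : Finset (Equiv.Perm (Fin (m+2)))))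
    (fun σ _ hσ => by
      rw [Finset.mem_insert, Finset.mem_singleton] at hσ
      push_neg at hσ
      rw [hvanish σ hσ.1 hσ.2, mul_zero])]
  rw [Finset.sum_pair (Ne.symm hc1)]
  have hid : ∏ i, N ((1 : Equiv.Perm (Fin (m+2))) i) i = ∏ k, (lam - (a k : ℂ)) := by
    simp [hNd]
  have hcp : ∏ i, N (c i) i = ∏ k, (b k : ℂ) := by
    have hterm : ∀ i, N (c i) i = (b (c i) : ℂ) := by
      intro i
      rw [hc i, hNo (i - 1) i (hsub i), if_pos ((hcond (i-1) i).mpr (by rw [sub_add_cancel]))]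
    rw [Finset.prod_congr rfl (fun i _ => hterm i)]
    exact Equiv.prod_comp c (fun i => (b i : ℂ))
  rw [hid, hcp]
  have hsign : Equiv.Perm.sign c = (-1 : ℤˣ) ^ (m + 1) := by
    rw [hcdef, Equiv.Perm.sign_inv, sign_finRotate]; rfl
  rw [hsign]
  simp

lemma abs_factor_ge {lam : ℂ} (hre : lam.re ≤ 0) {t : ℝ} (ht : 0 < t) :
    t ≤ ‖lam - t‖ := by
  have h2 : t ^ 2 ≤ (‖lam - t‖) ^ 2 := by
    rw [Complex.sq_norm, Complex.normSq_apply]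
    simp only [Complex.sub_re, Complex.sub_im, Complex.ofReal_re, Complex.ofReal_im, sub_zero]
    nlinarith [sq_nonneg lam.im, sq_nonneg lam.re]
  nlinarith [norm_nonneg (lam - t)]

lemma abs_factor_gt {lam : ℂ} (hre : lam.re ≤ 0) (h0 : lam ≠ 0) {t : ℝ} (ht : 0 < t) :
    t < ‖lam - t‖ := by
  have h2 : t ^ 2 < (‖lam - t‖) ^ 2 := by
    rw [Complex.sq_norm, Complex.normSq_apply]
    simp only [Complex.sub_re, Complex.sub_im, Complex.ofReal_re, Complex.ofReal_im, sub_zero]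
    rcases eq_or_ne lam.im 0 with him | him
    · have hre' : lam.re ≠ 0 := fun h => h0 (Complex.ext h him)
      have : lam.re < 0 := lt_of_le_of_ne hre hre'
      nlinarith [sq_nonneg lam.im]
    · have : 0 < lam.im ^ 2 := pow_pos (abs_pos.mpr him) 2 |>.trans_eq (by rw [sq_abs]) |> fun h => h
      nlinarith [this]
  nlinarith [norm_nonneg (lam - t), ht]

/-- let `X = X(a,b) ∈ DC(α, β)` with `n ≥ 2`, `α, β > 0`.
(a) If `α > β`, then no eigenvalue `λ` of `X` (root of the characteristic
polynomial over `ℂ`) satisfies `Re λ ≤ 0`.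
(b) If `α = β`, then `0` is an eigenvalue of `X`, and every eigenvalue `λ`
of `X` with `Re λ ≤ 0` equals `0`. -/
theorem stmt4 (n : ℕ) (hn : 2 ≤ n) (α β : ℝ) (hα : 0 < α) (hβ : 0 < β)
    (a b : Fin n → ℝ) (ha : ∀ k, 0 < a k) (hb : ∀ k, 0 < b k)
    (hga : ∏ k, a k = α ^ n) (hgb : ∏ k, b k = β ^ n) :
    (β < α → ∀ lam : ℂ,
      (((dcMatrix a b).map Complex.ofReal).charpoly).IsRoot lam → ¬ lam.re ≤ 0) ∧
    (α = β →
      (((dcMatrix a b).map Complex.ofReal).charpoly).IsRoot 0 ∧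
      ∀ lam : ℂ,
        (((dcMatrix a b).map Complex.ofReal).charpoly).IsRoot lam → lam.re ≤ 0 → lam = 0) := by
  obtain ⟨m, rfl⟩ : ∃ m, n = m + 2 := ⟨n - 2, by omega⟩
  have hroot : ∀ lam : ℂ, (((dcMatrix a b).map Complex.ofReal).charpoly).IsRoot lam ↔
      ∏ k, (lam - (a k : ℂ)) = (-1) ^ (m + 2) * ∏ k, (b k : ℂ) := by
    intro lam
    rw [Polynomial.IsRoot, dc_eval, add_eq_zero_iff_eq_neg]
    constructor <;> intro h <;> rw [h] <;> ring
  -- product of b's over ℂ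
  have hbprod : ∏ k, ((b k : ℝ) : ℂ) = ((β : ℂ)) ^ (m + 2) := by
    push_cast [← hgb]
    norm_cast
  have haprod : ∏ k, ((a k : ℝ) : ℂ) = ((α : ℂ)) ^ (m + 2) := by
    push_cast [← hga]
    norm_cast
  -- absolute value identity for roots
  have habs : ∀ lam : ℂ, (((dcMatrix a b).map Complex.ofReal).charpoly).IsRoot lam →
      ∏ k, ‖lam - (a k : ℂ)‖ = β ^ (m + 2) := by
    intro lam hr
    have h := (hroot lam).mp hr
    have h2 := congrArg norm h
    rw [norm_prod, norm_mul, norm_pow, norm_prod] at h2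
    simpa [Complex.norm_real, Real.norm_eq_abs, abs_of_pos (hb _), hgb] using h2
  constructor
  · intro hlt lam hr hre
    have hge : ∏ k, a k ≤ ∏ k, ‖lam - (a k : ℂ)‖ :=
      Finset.prod_le_prod (fun k _ => (ha k).le) (fun k _ => abs_factor_ge hre (ha k))
    rw [habs lam hr, hga] at hge
    exact absurd hge (not_le.mpr (pow_lt_pow_left₀ hlt hβ.le (by omega)))
  · intro hab
    constructor
    · rw [hroot 0]
      have : ∀ k : Fin (m+2), (0 : ℂ) - (a k : ℂ) = -1 * (a k : ℂ) := fun k => by ring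
      rw [Finset.prod_congr rfl (fun k _ => this k), Finset.prod_mul_distrib,
        Finset.prod_const, Finset.card_univ, Fintype.card_fin, haprod, hbprod, hab]
    · intro lam hr hre
      by_contra h0
      have hgt : ∏ k, a k < ∏ k, ‖lam - (a k : ℂ)‖ :=
        Finset.prod_lt_prod_of_nonempty (fun k _ => ha k)
          (fun k _ => abs_factor_gt hre h0 (ha k)) Finset.univ_nonempty
      rw [habs lam hr, hga, hab] at hgt
      exact lt_irrefl _ hgt
end

section
/- Let n ≥ 2, let σ be an n-cycle permutation of {1,…,n} with permutation matrix Σ, let A = diag(a_1,…,a_n) be a real diagonal matrix, and let β ∈ ℝ. Then for every λ, det((A − λI) − βΣ) = ∏_{k=1}^n (a_k − λ) − β^n. -/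
open Matrix

/-- If `σ` is a cycle with full support and `τ` agrees pointwise with `1` or `σ`
at every point, then `τ = 1` or `τ = σ`. -/
lemma cycle_dichotomy {n : ℕ} (σ τ : Equiv.Perm (Fin n))
    (hcyc : σ.IsCycle) (hsupp : σ.support = Finset.univ)
    (h : ∀ i, τ i = i ∨ τ i = σ i) : τ = 1 ∨ τ = σ := by
  have hmove : ∀ i : Fin n, σ i ≠ i := by
    intro i
    have hi : i ∈ σ.support := hsupp ▸ Finset.mem_univ i
    exact Equiv.Perm.mem_support.mp hi
  by_cases hS : ∀ i, τ i = σ i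
  · right; exact Equiv.ext hS
  · left
    push_neg at hS
    obtain ⟨j, hj⟩ := hS
    have hstep : ∀ i, τ i = σ i → τ (σ i) = σ (σ i) := by
      intro i hi
      rcases h (σ i) with h1 | h1
      · exfalso
        have : σ i = i := τ.injective (by rw [h1, hi])
        exact hmove i this
      · exact h1
    have hpow : ∀ (k : ℕ) (i : Fin n), τ i = σ i → τ ((σ ^ k) i) = σ ((σ ^ k) i) := by
      intro k
      induction k with
      | zero => simp only [pow_zero, Equiv.Perm.one_apply]; exact fun i hh => hh
      | succ m ih =>
        intro i hi
        have h1 := hstep _ (ih i hi)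
        have h2 : σ ((σ ^ m) i) = (σ ^ (m + 1)) i := by
          rw [pow_succ', Equiv.Perm.mul_apply]
        rw [h2] at h1
        exact h1
    apply Equiv.ext
    intro i
    rcases h i with h1 | h1
    · exact h1
    · exfalso
      obtain ⟨x, hx, hall⟩ := hcyc
      have sc : σ.SameCycle i j :=
        ((hall (hmove i)).symm.trans (hall (hmove j)))
      obtain ⟨k, -, -, hk⟩ := Equiv.Perm.SameCycle.exists_pow_eq σ sc
      exact hj (hk ▸ hpow k i h1)

/-- for an `n`-cycle permutation `σ` of `{1,…,n}` with permutation
matrix `Σ`, a real diagonal matrix `A = diag(a₁,…,aₙ)`, and `β, λ ∈ ℝ`,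
`det((A − λI) − βΣ) = ∏ₖ (aₖ − λ) − βⁿ`. -/
theorem stmt7 (n : ℕ) (hn : 2 ≤ n) (σ : Equiv.Perm (Fin n))
    (hcyc : σ.IsCycle) (hsupp : σ.support = Finset.univ)
    (a : Fin n → ℝ) (β lam : ℝ) :
    (Matrix.diagonal a - lam • (1 : Matrix (Fin n) (Fin n) ℝ)
        - β • Matrix.of (fun i j => if j = σ i then (1 : ℝ) else 0)).det
      = (∏ k, (a k - lam)) - β ^ n := by
  have hmove : ∀ i : Fin n, σ i ≠ i := by
    intro i
    have hi : i ∈ σ.support := hsupp ▸ Finset.mem_univ i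
    exact Equiv.Perm.mem_support.mp hi
  set M : Matrix (Fin n) (Fin n) ℝ :=
    Matrix.diagonal a - lam • (1 : Matrix (Fin n) (Fin n) ℝ)
      - β • Matrix.of (fun i j => if j = σ i then (1 : ℝ) else 0) with hM
  have hentry : ∀ i j : Fin n,
      M i j = (if i = j then a i - lam else 0) - (if j = σ i then β else 0) := by
    intro i j
    simp only [hM, Matrix.sub_apply, Matrix.smul_apply, Matrix.diagonal_apply,
      Matrix.one_apply, Matrix.of_apply, smul_eq_mul]
    split_ifs <;> ring
  have hσinv : ∀ i : Fin n, σ⁻¹ i ≠ i := by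
    intro i hi
    exact hmove i (by conv_lhs => rw [← hi, (by exact Equiv.apply_symm_apply σ i : σ (σ⁻¹ i) = i)])
  haveI : Nonempty (Fin n) := Fin.pos_iff_nonempty.mp (by omega)
  have hne : (1 : Equiv.Perm (Fin n)) ≠ σ⁻¹ := by
    intro hcontra
    exact hσinv (Classical.arbitrary (Fin n)) (by rw [← hcontra]; rfl)
  rw [Matrix.det_apply]
  rw [← Finset.sum_subset (Finset.subset_univ ({1, σ⁻¹} : Finset (Equiv.Perm (Fin n))))
      (by
        intro τ _ hτ
        simp only [Finset.mem_insert, Finset.mem_singleton] at hτ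
        push_neg at hτ
        -- there is some i with τ i ≠ i and τ i ≠ σ⁻¹ i
        have : ¬ ∀ i, τ i = i ∨ τ i = σ⁻¹ i := by
          intro hall
          rcases cycle_dichotomy σ⁻¹ τ hcyc.inv (by rw [Equiv.Perm.support_inv]; exact hsupp)
            hall with h | h
          · exact hτ.1 h
          · exact hτ.2 h
        push_neg at this
        obtain ⟨i, hi1, hi2⟩ := this
        have hzero : M (τ i) i = 0 := by
          rw [hentry]
          rw [if_neg hi1, if_neg (by
            intro hcontra
            apply hi2
            apply σ.injective
            rw [(by exact Equiv.apply_symm_apply σ i : σ (σ⁻¹ i) = i)]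
            exact hcontra.symm)]
          ring
        rw [show (∏ x, M (τ x) x) = 0 from
          Finset.prod_eq_zero (Finset.mem_univ i) hzero, smul_zero])]
  rw [Finset.sum_pair hne]
  have hterm1 : (Equiv.Perm.sign (1 : Equiv.Perm (Fin n))) •
      ∏ i, M ((1 : Equiv.Perm (Fin n)) i) i = ∏ k, (a k - lam) := by
    simp only [Equiv.Perm.sign_one, one_smul, Equiv.Perm.one_apply]
    apply Finset.prod_congr rfl
    intro i _
    rw [hentry, if_pos rfl, if_neg (fun hc => hmove i hc.symm), sub_zero]
  have hterm2 : (Equiv.Perm.sign (σ⁻¹ : Equiv.Perm (Fin n))) •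
      ∏ i, M (σ⁻¹ i) i = -β ^ n := by
    have hprod : ∏ i, M (σ⁻¹ i) i = (-β) ^ n := by
      have heach : ∀ i ∈ Finset.univ, M (σ⁻¹ i) i = -β := by
        intro i _
        rw [hentry, if_neg (hσinv i), if_pos (by exact Equiv.apply_symm_apply σ i : σ (σ⁻¹ i) = i).symm]
        ring
      rw [Finset.prod_congr rfl heach, Finset.prod_const, Finset.card_univ,
        Fintype.card_fin]
    have hsign : Equiv.Perm.sign σ⁻¹ = -(-1 : ℤˣ) ^ n := by
      rw [Equiv.Perm.sign_inv, hcyc.sign, hsupp, Finset.card_univ, Fintype.card_fin]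
    have hcast : (((Equiv.Perm.sign σ⁻¹ : ℤˣ) : ℤ) : ℝ) = -(-1 : ℝ) ^ n := by
      rw [hsign]; push_cast; ring
    have h11 : (-1 : ℝ) ^ n * (-1) ^ n = 1 := by rw [← mul_pow]; norm_num
    rw [hprod, Units.smul_def, zsmul_eq_mul, hcast, neg_pow]
    linear_combination (-β ^ n) * h11
  rw [hterm1, hterm2]
  ring
end

section
/- Fix 0 < γ < 1 and positive reals D_*, D^* with D_* ≤ γ ≤ D^*. Let c = (c_1,…,c_n) ∈ [D_*, D^*]^n satisfy ∏_{k=1}^n c_k = γ^n. Then every z ∈ ℂ with P(z; c) = 1 satisfies |z| > d, where d = (1 − γ^n)(1 + D^*)^{−n}; that is, the equation P(z; c) = 1 has no roots in the closed disk {z ∈ ℂ : |z| ≤ d}. -/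
open Polynomial

noncomputable def Pc {n : ℕ} (c : Fin n → ℝ) : Polynomial ℂ :=
  ∏ k, (X + C (c k : ℂ))

lemma key {ι : Type*} (z : ℂ) (hz1 : ‖z‖ ≤ 1) (s : Finset ι) (c : ι → ℝ)
    (hc : ∀ i ∈ s, 0 ≤ c i) :
    ‖∏ i ∈ s, (z + (c i : ℂ)) - ∏ i ∈ s, (c i : ℂ)‖ ≤
      ‖z‖ * (∏ i ∈ s, (1 + c i) - ∏ i ∈ s, c i) := by
  classical
  induction s using Finset.induction with
  | empty => simp
  | @insert a t ha ih =>
    have hca : 0 ≤ c a := hc a (Finset.mem_insert_self a t)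
    have hct : ∀ i ∈ t, 0 ≤ c i := fun i hi => hc i (Finset.mem_insert_of_mem hi)
    have ih' := ih hct
    simp only [Finset.prod_insert ha]
    have hsplit : (z + (c a : ℂ)) * ∏ i ∈ t, (z + (c i : ℂ)) -
        (c a : ℂ) * ∏ i ∈ t, (c i : ℂ) =
        z * ∏ i ∈ t, (z + (c i : ℂ)) +
          (c a : ℂ) * (∏ i ∈ t, (z + (c i : ℂ)) - ∏ i ∈ t, (c i : ℂ)) := by
      ring
    rw [hsplit]
    have h1 : ‖z * ∏ i ∈ t, (z + (c i : ℂ))‖ ≤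
        ‖z‖ * ∏ i ∈ t, (1 + c i) := by
      rw [norm_mul]
      refine mul_le_mul_of_nonneg_left ?_ (norm_nonneg z)
      rw [norm_prod]
      apply Finset.prod_le_prod (fun i _ => norm_nonneg _)
      intro i hi
      calc ‖z + (c i : ℂ)‖ ≤ ‖z‖ + ‖(c i : ℂ)‖ :=
            norm_add_le _ _
        _ ≤ 1 + c i := by
            rw [Complex.norm_real, Real.norm_eq_abs, abs_of_nonneg (hct i hi)]
            gcongr
    have h2 : ‖(c a : ℂ) * (∏ i ∈ t, (z + (c i : ℂ)) - ∏ i ∈ t, (c i : ℂ))‖ ≤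
        c a * (‖z‖ * (∏ i ∈ t, (1 + c i) - ∏ i ∈ t, c i)) := by
      rw [norm_mul, Complex.norm_real, Real.norm_eq_abs, abs_of_nonneg hca]
      gcongr
    calc ‖z * ∏ i ∈ t, (z + (c i : ℂ)) +
          (c a : ℂ) * (∏ i ∈ t, (z + (c i : ℂ)) - ∏ i ∈ t, (c i : ℂ))‖
        ≤ _ + _ := norm_add_le _ _
      _ ≤ ‖z‖ * ∏ i ∈ t, (1 + c i) +
          c a * (‖z‖ * (∏ i ∈ t, (1 + c i) - ∏ i ∈ t, c i)) := add_le_add h1 h2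
      _ = ‖z‖ * ((1 + c a) * ∏ i ∈ t, (1 + c i) - c a * ∏ i ∈ t, c i) := by ring

/-- with `0 < γ < 1`, `0 < D_* ≤ γ ≤ D^*`, and
`c ∈ [D_*, D^*]ⁿ` with `∏ₖ cₖ = γⁿ`, every root `z` of `P(z; c) = 1` satisfies
`|z| > d` where `d = (1 − γⁿ)(1 + D^*)⁻ⁿ`; i.e. there are no roots in the
closed disk of radius `d`. -/
theorem stmt10 (n : ℕ) (hn : 1 ≤ n) (γ Dlo Dhi : ℝ) (hγ0 : 0 < γ) (hγ1 : γ < 1)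
    (hlo : 0 < Dlo) (hloγ : Dlo ≤ γ) (hγhi : γ ≤ Dhi)
    (c : Fin n → ℝ) (hc : ∀ k, Dlo ≤ c k ∧ c k ≤ Dhi) (hg : ∏ k, c k = γ ^ n)
    (z : ℂ) (hz : (Pc c).eval z = 1) :
    (1 - γ ^ n) / (1 + Dhi) ^ n < ‖z‖ := by
  have hDhi : 0 < Dhi := lt_of_lt_of_le hγ0 hγhi
  have hγn1 : γ ^ n < 1 := pow_lt_one₀ hγ0.le hγ1 (by omega)
  have hγn0 : 0 < γ ^ n := pow_pos hγ0 n
  have hden : (1 : ℝ) ≤ (1 + Dhi) ^ n := one_le_pow₀ (by linarith : (1:ℝ) ≤ 1 + Dhi)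
  have hd1 : (1 - γ ^ n) / (1 + Dhi) ^ n < 1 := by
    rw [div_lt_one (by linarith)]
    linarith
  by_cases hz1 : ‖z‖ ≤ 1
  · have heval : ∏ k, (z + (c k : ℂ)) = 1 := by
      rw [← hz]
      simp [Pc, eval_prod]
    have hgc : ∏ k, ((c k : ℝ) : ℂ) = ((γ ^ n : ℝ) : ℂ) := by
      push_cast [← hg]
      rfl
    have hkey := key z hz1 Finset.univ c (fun i _ => le_of_lt (lt_of_lt_of_le hlo (hc i).1))
    rw [heval, hgc] at hkey
    have habs : ‖1 - ((γ ^ n : ℝ) : ℂ)‖ = 1 - γ ^ n := by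
      rw [show (1 : ℂ) - ((γ ^ n : ℝ) : ℂ) = ((1 - γ ^ n : ℝ) : ℂ) by push_cast; ring,
        Complex.norm_real, Real.norm_eq_abs, abs_of_nonneg (by linarith)]
    rw [habs, hg] at hkey
    have hprodle : ∏ k, (1 + c k) ≤ (1 + Dhi) ^ n := by
      calc ∏ k : Fin n, (1 + c k) ≤ ∏ _k : Fin n, (1 + Dhi) := by
            apply Finset.prod_le_prod
            · intro i _; have := (hc i).1; linarith
            · intro i _; have := (hc i).2; linarith
        _ = (1 + Dhi) ^ n := by simp
    have hdpos : 0 < (1 + Dhi) ^ n - γ ^ n := by linarith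
    have hkey2 : 1 - γ ^ n ≤ ‖z‖ * ((1 + Dhi) ^ n - γ ^ n) := by
      have := mul_le_mul_of_nonneg_left (sub_le_sub_right hprodle (γ ^ n)) (norm_nonneg z)
      linarith
    have h3 : (1 - γ ^ n) / ((1 + Dhi) ^ n - γ ^ n) ≤ ‖z‖ := by
      rw [div_le_iff₀ hdpos]
      linarith [hkey2]
    refine lt_of_lt_of_le ?_ h3
    apply div_lt_div_of_pos_left (by linarith) hdpos (by linarith)
  · linarith [hd1, not_le.mp hz1]
end

section
/- Fix positive reals D_* and D^* and let c = (c_1,…,c_n) ∈ [D_*, D^*]^n. Then every root z ∈ ℂ of P(z; c) = 1 with Re z ≥ −D_*/3 satisfies |z| < 1. -/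
open Polynomial

/-- for positive reals `D_* ≤ D^*` and `c ∈ [D_*, D^*]ⁿ`, every
root `z` of `P(z; c) = 1` with `Re z ≥ −D_*/3` satisfies `|z| < 1`. -/
theorem stmt11 (n : ℕ) (hn : 1 ≤ n) (Dlo Dhi : ℝ) (hlo : 0 < Dlo) (hhi : 0 < Dhi)
    (c : Fin n → ℝ) (hc : ∀ k, Dlo ≤ c k ∧ c k ≤ Dhi)
    (z : ℂ) (hz : (Pc c).eval z = 1) (hre : -(Dlo / 3) ≤ z.re) :
    ‖z‖ < 1 := by
  by_contra h
  push_neg at h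
  have heval : (Pc c).eval z = ∏ k, (z + (c k : ℂ)) := by
    simp [Pc, eval_prod]
  have habs : ‖(Pc c).eval z‖ = ∏ k, ‖z + (c k : ℂ)‖ := by
    rw [heval, norm_prod]
  have hfac : ∀ k, 1 < ‖z + (c k : ℂ)‖ := by
    intro k
    obtain ⟨h1, h2⟩ := hc k
    have hck : 0 < c k := lt_of_lt_of_le hlo h1
    have hrek : -(c k / 3) ≤ z.re := by linarith
    have hsq : 1 ≤ z.re ^ 2 + z.im ^ 2 := by
      have := Complex.sq_norm z
      rw [Complex.normSq_apply] at this
      nlinarith [norm_nonneg z]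
    have : 1 < ‖z + (c k : ℂ)‖ ^ 2 := by
      rw [Complex.sq_norm, Complex.normSq_apply]
      simp only [Complex.add_re, Complex.add_im, Complex.ofReal_re, Complex.ofReal_im]
      nlinarith
    nlinarith [norm_nonneg (z + (c k : ℂ))]
  have hprod : 1 < ∏ k, ‖z + (c k : ℂ)‖ := by
    have hne : (Finset.univ : Finset (Fin n)).Nonempty := by
      simpa [Finset.univ_nonempty_iff] using Fin.pos_iff_nonempty.mp hn
    calc (1:ℝ) = ∏ _k : Fin n, 1 := by simp
      _ < ∏ k, ‖z + (c k : ℂ)‖ :=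
        Finset.prod_lt_prod_of_nonempty (fun k _ => one_pos) (fun k _ => hfac k) hne
  rw [hz] at habs
  simp at habs
  linarith
end

section
/- Fix positive reals D_* and D^*, let c = (c_1,…,c_n) ∈ [D_*, D^*]^n, and let w ∈ ℂ satisfy P(w; c) = 1 and Re w ≥ −D_*/3. Then Re P'(w; c) ≥ (2n D_*)/(3(1 + D^*)²) > 0, where P'(·; c) is the derivative of the polynomial P(·; c). In particular, w is a simple root of P(z; c) = 1. -/
open Polynomial

/-- for positive reals `D_*`, `D^*`, `c ∈ [D_*, D^*]ⁿ`, and a root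
`w` of `P(w; c) = 1` with `Re w ≥ −D_*/3`, we have
`Re P'(w; c) ≥ 2nD_*/(3(1 + D^*)²) > 0`; in particular `w` is a simple root
of `P(z; c) = 1`. -/
theorem stmt12 (n : ℕ) (hn : 1 ≤ n) (Dlo Dhi : ℝ) (hlo : 0 < Dlo) (hhi : 0 < Dhi)
    (c : Fin n → ℝ) (hc : ∀ k, Dlo ≤ c k ∧ c k ≤ Dhi)
    (w : ℂ) (hw : (Pc c).eval w = 1) (hre : -(Dlo / 3) ≤ w.re) :
    (2 * n * Dlo) / (3 * (1 + Dhi) ^ 2) ≤ ((derivative (Pc c)).eval w).re ∧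
    0 < (2 * n * Dlo) / (3 * (1 + Dhi) ^ 2) ∧
    (Pc c - 1).rootMultiplicity w = 1 := by
  have hlohi : Dlo ≤ Dhi := (hc ⟨0, hn⟩).1.trans (hc ⟨0, hn⟩).2
  set f : Fin n → ℂ := fun k => w + (c k : ℂ) with hf
  -- real part lower bound for each factor
  have hrepos : ∀ k, 2 * Dlo / 3 ≤ (f k).re := by
    intro k
    simp only [hf, Complex.add_re, Complex.ofReal_re]
    have := (hc k).1
    linarith
  have hfne : ∀ k, f k ≠ 0 := by
    intro k h
    have := hrepos k
    rw [h] at this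
    simp at this
    linarith
  have hprod : ∏ k, f k = 1 := by
    have : (Pc c).eval w = ∏ k, f k := by
      simp [Pc, eval_prod, hf]
    rw [this] at hw; exact hw
  -- some factor has modulus ≤ 1
  have habs : ∏ k, ‖f k‖ = 1 := by
    rw [← norm_prod, hprod, norm_one]
  obtain ⟨k0, hk0⟩ : ∃ k0, ‖f k0‖ ≤ 1 := by
    by_contra h
    push_neg at h
    have : ∏ _k : Fin n, (1:ℝ) < ∏ k, ‖f k‖ :=
      Finset.prod_lt_prod_of_nonempty (fun _ _ => one_pos) (fun k _ => h k)
        ⟨⟨0, hn⟩, Finset.mem_univ _⟩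
    rw [habs, Finset.prod_const_one] at this; exact lt_irrefl _ this
  -- modulus upper bound for all factors
  have hub : ∀ k, ‖f k‖ ≤ 1 + Dhi := by
    intro k
    have : f k = f k0 + ((c k - c k0 : ℝ) : ℂ) := by
      simp only [hf]; push_cast; ring
    rw [this]
    refine (norm_add_le _ _).trans ?_
    have h1 : ‖((c k - c k0 : ℝ) : ℂ)‖ = |c k - c k0| := by rw [Complex.norm_real, Real.norm_eq_abs]
    have h2 : |c k - c k0| ≤ Dhi := by
      have := (hc k).1; have := (hc k).2; have := (hc k0).1; have := (hc k0).2
      rw [abs_le]; constructor <;> linarith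
    rw [h1]; linarith
  -- Re (1/(f k)) bound
  have hinv : ∀ k, 2 * Dlo / (3 * (1 + Dhi) ^ 2) ≤ ((f k)⁻¹).re := by
    intro k
    rw [Complex.inv_re]
    have hns : Complex.normSq (f k) ≤ (1 + Dhi) ^ 2 := by
      rw [← Complex.sq_norm]
      exact pow_le_pow_left₀ (norm_nonneg _) (hub k) 2
    have hnspos : 0 < Complex.normSq (f k) := Complex.normSq_pos.2 (hfne k)
    rw [← div_div]
    refine div_le_div₀ (le_trans (by linarith) (hrepos k)) (hrepos k) hnspos hns
  -- derivative evaluation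
  have hderiv : ((derivative (Pc c)).eval w) = ∑ k, (f k)⁻¹ := by
    have : derivative (Pc c) = ∑ k, ((Finset.univ.erase k).prod fun j => X + C (c j : ℂ)) := by
      rw [Pc, Finset.prod_eq_multiset_prod, derivative_prod, Finset.sum_eq_multiset_sum]
      congr 1
      apply Multiset.map_congr rfl
      intro i _
      rw [derivative_add, derivative_X, derivative_C, add_zero, mul_one,
        Finset.prod_eq_multiset_prod, Finset.erase_val]
    rw [this, eval_finset_sum]
    congr 1; ext k
    have he : ((Finset.univ.erase k).prod fun j => X + C (c j : ℂ)).eval w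
        = ∏ j ∈ Finset.univ.erase k, f j := by simp [eval_prod, hf]
    rw [he]
    exact eq_inv_of_mul_eq_one_right (by
      rw [Finset.mul_prod_erase _ _ (Finset.mem_univ k), hprod])
  have hmain : (2 * n * Dlo) / (3 * (1 + Dhi) ^ 2) ≤ ((derivative (Pc c)).eval w).re := by
    rw [hderiv, Complex.re_sum]
    calc (2 * n * Dlo) / (3 * (1 + Dhi) ^ 2)
        = n * (2 * Dlo / (3 * (1 + Dhi) ^ 2)) := by ring
      _ = ∑ _k : Fin n, 2 * Dlo / (3 * (1 + Dhi) ^ 2) := by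
            rw [Finset.sum_const, Finset.card_univ, Fintype.card_fin, nsmul_eq_mul]
      _ ≤ ∑ k, ((f k)⁻¹).re := Finset.sum_le_sum fun k _ => hinv k
  have hpos : 0 < (2 * n * Dlo) / (3 * (1 + Dhi) ^ 2) := by
    apply div_pos
    · have : (0:ℝ) < n := by exact_mod_cast hn
      positivity
    · positivity
  refine ⟨hmain, hpos, ?_⟩
  -- simple root
  have hdne : (derivative (Pc c)).eval w ≠ 0 := by
    intro h
    rw [h] at hmain
    simp at hmain
    nlinarith
  have hpne : Pc c - 1 ≠ 0 := by
    intro h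
    have : derivative (Pc c) = 0 := by
      have := congrArg derivative h
      simpa using this
    rw [this] at hdne; simp at hdne
  have hroot : (Pc c - 1).IsRoot w := by simp [IsRoot, hw]
  have h1 : 1 ≤ (Pc c - 1).rootMultiplicity w := (rootMultiplicity_pos hpne).2 hroot
  have h2 : ¬ 1 < (Pc c - 1).rootMultiplicity w := by
    rw [one_lt_rootMultiplicity_iff_isRoot hpne]
    rintro ⟨-, hd⟩
    apply hdne
    simpa [IsRoot] using hd
  omega
end
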